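/- arXiv:1512.04936 — 2 statements merged into one kernel-verified Lean document; each statement's English description precedes it below -/
import Mathlib

section
/- Let (X,d) be a doubling metric space. Then there exists a quasi-distance ρ on X that is continuous on X × X (for the topology induced by d), is biLipschitz equivalent to d (i.e., there is L ≥ 1 with L^{-1}·d(x,y) ≤ ρ(x,y) ≤ L·d(x,y) for all x,y ∈ X), and such that (X,ρ) satisfies the Besicovitch Covering Property. -/
/-- The closed ball of center `p` and radius `r` for a distance-like function `d`. -/
def QBall {X : Type*} (d : X → X → ℝ) (p : X) (r : ℝ) : Set X := {q | d q p ≤ r}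

/-- A quasi-distance. -/
def IsQuasiDist {X : Type*} (d : X → X → ℝ) : Prop :=
  (∀ p q, 0 ≤ d p q) ∧ (∀ p q, d p q = d q p) ∧ (∀ p q, d p q = 0 ↔ p = q) ∧
    ∃ C : ℝ, 1 ≤ C ∧ ∀ p p' q, d p q ≤ C * (d p p' + d p' q)

/-- A set is bounded if it is contained in some ball. -/
def QBounded {X : Type*} (d : X → X → ℝ) (A : Set X) : Prop :=
  ∃ p r, 0 < r ∧ A ⊆ QBall d p r

/-- `(X,d)` is doubling. -/
def IsDoubling {X : Type*} (d : X → X → ℝ) : Prop :=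
  ∃ C : ℕ, 1 ≤ C ∧ ∀ (p : X) (r : ℝ), 0 < r →
    ∃ t : Finset X, t.card ≤ C ∧ QBall d p (2 * r) ⊆ ⋃ x ∈ t, QBall d x r

/-- The Besicovitch Covering Property. -/
def HasBCP {X : Type*} (d : X → X → ℝ) : Prop :=
  ∃ N : ℕ, 1 ≤ N ∧ ∀ (A : Set X) (r : X → ℝ), QBounded d A → (∀ a ∈ A, 0 < r a) →
    ∃ F : Set X, F ⊆ A ∧ F.Countable ∧ (∀ a ∈ A, ∃ x ∈ F, a ∈ QBall d x (r x)) ∧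
      ∀ y : X, ({x ∈ F | y ∈ QBall d x (r x)}).encard ≤ (N : ℕ∞)

/-!
The proof is Assouad's embedding theorem. At the dyadic scale `2^(-j)`, a maximal
`4^(-j)`-separated net is colored with `C ^ 6` colors so that points of equal color are
`25 · 4^(-j)` apart (possible because, by doubling, a ball of radius `32 · 4^(-j)` holds at most
`C ^ 6` net points). For each color `c`, put `2^(-j)` times a tent function of width `4 · 4^(-j)`
around the color class into coordinate `(j mod 6, c)`, summing over all scales. Inside one
coordinate the weights of consecutive scales differ by the factor `64`, so for fixed `x, y` the
terms form two geometric tails around the scale `4^(-j) ≈ d(x, y)`. This gives a map `f` into the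
finite-dimensional space `Fin 6 × Fin (C ^ 6) → ℝ` with
`√d(x, y) / 10 ≤ ‖f x - f y‖ ≤ 2 √d(x, y)`.

Then `ρ(x, y) = ‖f x - f y‖²` is a quasi-distance (constant `2`), biLipschitz to `d`, and
continuous. The `ρ`-balls are preimages of balls of the target, so the Besicovitch covering
theorem for finite-dimensional normed spaces carries over to `(X, ρ)`.
-/

open Metric Set Function

def IsDoublingWith (X : Type*) [MetricSpace X] (C : ℕ) : Prop :=
  ∀ (p : X) (r : ℝ), 0 < r →
    ∃ t : Finset X, t.card ≤ C ∧ closedBall p (2 * r) ⊆ ⋃ x ∈ t, closedBall x r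

namespace IsDoublingWith

variable {X : Type*} [MetricSpace X] {C : ℕ}

lemma exists_cover_pow (h : IsDoublingWith X C) (n : ℕ) (p : X) {r : ℝ} (hr : 0 < r) :
    ∃ t : Finset X, t.card ≤ C ^ n ∧ closedBall p (2 ^ n * r) ⊆ ⋃ x ∈ t, closedBall x r := by
  induction n generalizing r with
  | zero => exact ⟨{p}, by simp, by simp⟩
  | succ n ih =>
    classical
    obtain ⟨t, ht, hcover⟩ := ih (mul_pos two_pos hr)
    choose u hu hucover using fun x : X => h x r hr
    refine ⟨t.biUnion u, ?_, ?_⟩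
    · calc (t.biUnion u).card ≤ t.card * C := Finset.card_biUnion_le_card_mul _ _ _ fun x _ => hu x
        _ ≤ C ^ n * C := Nat.mul_le_mul_right _ ht
        _ = C ^ (n + 1) := (pow_succ C n).symm
    · intro q hq
      rw [pow_succ, mul_assoc] at hq
      obtain ⟨x, hxt, hqx⟩ := mem_iUnion₂.mp (hcover hq)
      obtain ⟨z, hzu, hqz⟩ := mem_iUnion₂.mp (hucover x hqx)
      exact mem_iUnion₂.mpr ⟨z, Finset.mem_biUnion.mpr ⟨x, hxt, hzu⟩, hqz⟩

lemma card_le_pow (h : IsDoublingWith X C) {n : ℕ} {p : X} {s : ℝ} (hs : 0 < s)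
    {F : Finset X} (hF : ↑F ⊆ closedBall p (2 ^ n * (s / 2)))
    (hsep : (F : Set X).Pairwise (s < dist · ·)) : F.card ≤ C ^ n := by
  obtain ⟨t, ht, hcover⟩ := h.exists_cover_pow n p (half_pos hs)
  have hcenter : ∀ a ∈ F, ∃ x ∈ t, a ∈ closedBall x (s / 2) := fun a ha => by
    simpa using hcover (hF ha)
  choose! φ hφt hφ using hcenter
  by_contra! hlt
  obtain ⟨a, ha, b, hb, hab, hφab⟩ :=
    Finset.exists_ne_map_eq_of_card_lt_of_maps_to (ht.trans_lt hlt) hφt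
  have hdist : dist a b ≤ s := by
    calc dist a b ≤ dist a (φ a) + dist b (φ b) := by rw [hφab]; exact dist_triangle_right _ _ _
      _ ≤ s / 2 + s / 2 := add_le_add (hφ a ha) (hφ b hb)
      _ = s := add_halves s
  exact (hsep ha hb hab).not_ge hdist

lemma exists_free_color (h : IsDoublingWith X C) {s : ℝ} (hs : 0 < s)
    {T : Set (Fin (C ^ 6) × X)} (hT : T.Pairwise fun p q => s < dist p.2 q.2) {x : X}
    (hfar : ∀ q ∈ T, s < dist x q.2) : ∃ c, ∀ a, (c, a) ∈ T → 25 * s < dist x a := by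
  classical
  by_contra! hall
  choose a haT hax using hall
  -- Otherwise `x` and one point of each color would be `C ^ 6 + 1` points, `s`-separated,
  -- in `closedBall x (25 * s) ⊆ closedBall x (2 ^ 6 * (s / 2))`.
  have hsep : ∀ c c', c ≠ c' → s < dist (a c) (a c') := fun c c' hne =>
    hT (haT c) (haT c') fun h => hne (congrArg Prod.fst h)
  have ha : Injective a := fun c c' hcc' => by
    by_contra hne
    have := hsep c c' hne
    rw [hcc', dist_self] at this
    linarith
  have hxa : x ∉ Finset.univ.image a := by
    simp only [Finset.mem_image, Finset.mem_univ, true_and, not_exists]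
    intro c hc
    have := hfar _ (haT c)
    rw [hc, dist_self] at this
    linarith
  have hcard := h.card_le_pow (n := 6) (p := x) hs (F := insert x (Finset.univ.image a))
    (by
      simp only [Finset.coe_insert, Finset.coe_image, Finset.coe_univ, image_univ]
      rintro _ (rfl | ⟨c, rfl⟩)
      · simpa using (half_pos hs).le
      · rw [mem_closedBall, dist_comm]
        linarith [hax c])
    (by
      simp only [Finset.coe_insert, Finset.coe_image, Finset.coe_univ, image_univ]
      refine pairwise_insert.2 ⟨?_, ?_⟩
      · rintro _ ⟨c, rfl⟩ _ ⟨c', rfl⟩ hne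
        exact hsep c c' fun h => hne (congrArg a h)
      · rintro _ ⟨c, rfl⟩ -
        exact ⟨hfar _ (haT c), dist_comm x (a c) ▸ hfar _ (haT c)⟩)
  rw [Finset.card_insert_of_notMem hxa, Finset.card_image_of_injective _ ha,
    Finset.card_univ, Fintype.card_fin] at hcard
  omega

lemma exists_colored_net (h : IsDoublingWith X C) {s : ℝ} (hs : 0 < s) :
    ∃ S : Fin (C ^ 6) → Set X, (∀ x, ∃ c, ∃ a ∈ S c, dist x a ≤ s) ∧
      ∀ c, (S c).Pairwise (25 * s < dist · ·) := by
  set good : Set (Set (Fin (C ^ 6) × X)) :=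
    {T | T.Pairwise fun p q => s < dist p.2 q.2 ∧ (p.1 = q.1 → 25 * s < dist p.2 q.2)}
  obtain ⟨T, hT⟩ := zorn_subset good fun c hc hchain =>
    ⟨⋃₀ c, (pairwise_sUnion hchain.directedOn).2 hc, fun _ => subset_sUnion_of_mem⟩
  refine ⟨fun c => {a | (c, a) ∈ T}, fun x => ?_, fun c a ha b hb hab =>
    (hT.1 ha hb (by simpa using hab)).2 rfl⟩
  by_contra! hfar
  obtain ⟨c, hc⟩ := h.exists_free_color hs (hT.1.imp fun _ _ => And.left)
    fun q hq => hfar q.1 q.2 hq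
  have hins : insert (c, x) T ∈ good := by
    refine pairwise_insert.2 ⟨hT.1, fun q hq _ => ?_⟩
    have hq₁ : s < dist x q.2 := hfar q.1 q.2 hq
    have hq₂ : c = q.1 → 25 * s < dist x q.2 := by
      rintro rfl
      exact hc q.2 hq
    exact ⟨⟨hq₁, hq₂⟩, dist_comm x q.2 ▸ ⟨hq₁, fun h => hq₂ h.symm⟩⟩
  have := hfar c x (hT.2 hins (subset_insert _ _) (mem_insert _ _))
  rw [dist_self] at this
  linarith

end IsDoublingWith

lemma summable_int_and_abs_tsum_sub_le {a : ℤ → ℝ} {A B q : ℝ} (hq₀ : 0 ≤ q) (hq₁ : q < 1)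
    (hfwd : ∀ k : ℕ, |a (k + 1)| ≤ A * q ^ k) (hbwd : ∀ k : ℕ, |a (-(k + 1))| ≤ B * q ^ k) :
    Summable a ∧ |∑' n, a n - a 0| ≤ (A + B) / (1 - q) := by
  have hgeom := hasSum_geometric_of_lt_one hq₀ hq₁
  have hsfwd : Summable fun k : ℕ => a (k + 1) :=
    .of_norm_bounded (hgeom.mul_left A).summable hfwd
  have hsbwd : Summable fun k : ℕ => a (-(k + 1)) :=
    .of_norm_bounded (hgeom.mul_left B).summable hbwd
  have hsnat : Summable fun n : ℕ => a n :=
    (summable_nat_add_iff 1).mp (by exact_mod_cast hsfwd)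
  have hsplit : ∑' n, a n - a 0 = ∑' k : ℕ, a (k + 1) + ∑' k : ℕ, a (-(k + 1)) := by
    rw [tsum_of_nat_of_neg_add_one hsnat hsbwd, hsnat.tsum_eq_zero_add]
    push_cast
    ring
  refine ⟨.of_nat_of_neg_add_one hsnat hsbwd, ?_⟩
  have hA := tsum_of_norm_bounded (f := fun k : ℕ => a (k + 1)) (hgeom.mul_left A) hfwd
  have hB := tsum_of_norm_bounded (f := fun k : ℕ => a (-(k + 1))) (hgeom.mul_left B) hbwd
  rw [Real.norm_eq_abs] at hA hB
  rw [hsplit, add_div, div_eq_mul_inv, div_eq_mul_inv]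
  exact (abs_add_le _ _).trans (add_le_add hA hB)

section Tent

variable {X : Type*} [MetricSpace X]

noncomputable def tent (T : Set X) (r : ℝ) (x : X) : ℝ := max (1 - infDist x T / r) 0

variable {T : Set X} {r : ℝ}

lemma tent_nonneg (x : X) : 0 ≤ tent T r x := le_max_right _ _

lemma tent_le_one (hr : 0 < r) (x : X) : tent T r x ≤ 1 :=
  max_le (by linarith [div_nonneg (infDist_nonneg (x := x) (s := T)) hr.le]) zero_le_one

lemma abs_tent_sub_tent_le (hr : 0 < r) (x y : X) :
    |tent T r x - tent T r y| ≤ dist x y / r := by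
  refine (abs_max_sub_max_le_abs (1 - infDist x T / r) (1 - infDist y T / r) 0).trans ?_
  rw [sub_sub_sub_cancel_left, ← sub_div, abs_div, abs_of_pos hr, abs_sub_comm]
  gcongr
  simpa [Real.dist_eq, dist_comm] using (lipschitz_infDist_pt T).dist_le_mul y x

lemma three_quarters_le_tent (hr : 0 < r) {x : X} (hx : infDist x T ≤ r / 4) :
    3 / 4 ≤ tent T r x := by
  refine le_max_of_le_left ?_
  have : infDist x T / r ≤ 1 / 4 := by rw [div_le_iff₀ hr]; linarith
  linarith

lemma tent_eq_zero (hr : 0 < r) {x : X} (hx : r ≤ infDist x T) : tent T r x = 0 := by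
  refine max_eq_right ?_
  rw [sub_nonpos, one_le_div hr]
  exact hx

end Tent

noncomputable def dyadic (j : ℤ) : ℝ := 2 ^ (-j)

lemma dyadic_pos (j : ℤ) : 0 < dyadic j := zpow_pos two_pos _

lemma dyadic_add (j k : ℤ) : dyadic (j + k) = dyadic j / 2 ^ k := by
  rw [dyadic, dyadic, neg_add, zpow_add₀ two_ne_zero, zpow_neg, zpow_neg, div_eq_mul_inv]

lemma dyadic_add_six_mul (j k : ℤ) : dyadic (j + 6 * k) = dyadic j / 64 ^ k := by
  rw [dyadic_add, zpow_mul]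
  norm_num

lemma exists_dyadic_le_lt (i : ℤ) {m : ℕ} (hm : m ≠ 0) {t : ℝ} (ht : 0 < t) :
    ∃ n : ℤ, dyadic (i + m * n) ≤ t ∧ t < 2 ^ m * dyadic (i + m * n) := by
  obtain ⟨N, hlo, hhi⟩ :=
    exists_mem_Ico_zpow (div_pos ht (dyadic_pos i)) (one_lt_pow₀ one_lt_two hm)
  have hdy : dyadic (i + m * -N) = dyadic i * ((2 : ℝ) ^ m) ^ N := by
    rw [dyadic_add, zpow_mul, zpow_neg, zpow_natCast, div_inv_eq_mul]
  refine ⟨-N, ?_, ?_⟩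
  · rw [hdy]
    rwa [le_div_iff₀ (dyadic_pos i), mul_comm] at hlo
  · rw [zpow_add_one₀ (by positivity), div_lt_iff₀ (dyadic_pos i)] at hhi
    rw [hdy]
    linarith

section Assouad

variable {X κ : Type*} [MetricSpace X] (S : ℤ → κ → Set X)

noncomputable def assouadTerm (j : ℤ) (c : κ) (x y : X) : ℝ :=
  dyadic j * (tent (S j c) (4 * dyadic j ^ 2) x - tent (S j c) (4 * dyadic j ^ 2) y)

noncomputable def assouadBlockSum (i : ℤ) (c : κ) (x y : X) : ℝ :=
  ∑' n : ℤ, assouadTerm S (i + 6 * n) c x y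

-- Without the base point `x₀` the series would diverge at the large scales `j → -∞`.
noncomputable def assouadMap (x₀ x : X) : Fin 6 × κ → ℝ :=
  fun ic => assouadBlockSum S ic.1 ic.2 x x₀

lemma abs_assouadTerm_le_dyadic (j : ℤ) (c : κ) (x y : X) :
    |assouadTerm S j c x y| ≤ dyadic j := by
  have hr : 0 < 4 * dyadic j ^ 2 := by have := dyadic_pos j; positivity
  rw [assouadTerm, abs_mul, abs_of_pos (dyadic_pos j)]
  exact mul_le_of_le_one_right (dyadic_pos j).le (abs_sub_le_of_nonneg_of_le (tent_nonneg x)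
    (tent_le_one hr x) (tent_nonneg y) (tent_le_one hr y))

lemma abs_assouadTerm_le_dist (j : ℤ) (c : κ) (x y : X) :
    |assouadTerm S j c x y| ≤ dist x y / (4 * dyadic j) := by
  have hj := dyadic_pos j
  calc |assouadTerm S j c x y| ≤ dyadic j * (dist x y / (4 * dyadic j ^ 2)) := by
        rw [assouadTerm, abs_mul, abs_of_pos hj]
        gcongr
        exact abs_tent_sub_tent_le (by positivity) x y
    _ = dist x y / (4 * dyadic j) := by field_simp

lemma assouadTerm_sub_assouadTerm (j : ℤ) (c : κ) (x y z : X) :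
    assouadTerm S j c x z - assouadTerm S j c y z = assouadTerm S j c x y := by
  simp only [assouadTerm]
  ring

lemma summable_and_abs_assouadBlockSum_sub_le (i n₀ : ℤ) (c : κ) (x y : X) :
    Summable (fun n : ℤ => assouadTerm S (i + 6 * n) c x y) ∧
      |assouadBlockSum S i c x y - assouadTerm S (i + 6 * n₀) c x y| ≤
        (dyadic (i + 6 * n₀) + dist x y / (4 * dyadic (i + 6 * n₀))) / 63 := by
  set j₀ := i + 6 * n₀
  set a : ℤ → ℝ := fun m => assouadTerm S (j₀ + 6 * m) c x y
  have hshift : (fun n : ℤ => assouadTerm S (i + 6 * n) c x y) = a ∘ Equiv.subRight n₀ := by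
    ext n
    simp only [a, j₀, comp_apply, Equiv.subRight_apply]
    ring_nf
  have hw := dyadic_pos j₀
  have key := summable_int_and_abs_tsum_sub_le (a := a) (q := 1 / 64)
    (A := dyadic j₀ / 64) (B := dist x y / (4 * dyadic j₀) / 64) (by norm_num) (by norm_num)
    (fun k => by
      calc |a (k + 1)| ≤ dyadic (j₀ + 6 * (k + 1)) := abs_assouadTerm_le_dyadic S _ c x y
        _ = dyadic j₀ / 64 * (1 / 64) ^ k := by
          rw [dyadic_add_six_mul, zpow_add_one₀ (by norm_num), zpow_natCast, one_div_pow]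
          field_simp)
    (fun k => by
      calc |a (-(k + 1))| ≤ dist x y / (4 * dyadic (j₀ + 6 * -(k + 1))) :=
            abs_assouadTerm_le_dist S _ c x y
        _ = dist x y / (4 * dyadic j₀) / 64 * (1 / 64) ^ k := by
          rw [dyadic_add_six_mul, zpow_neg, zpow_add_one₀ (by norm_num), zpow_natCast,
            div_inv_eq_mul, one_div_pow]
          field_simp)
  have htsum : assouadBlockSum S i c x y = ∑' m, a m := by
    rw [assouadBlockSum, hshift]
    exact (Equiv.subRight n₀).tsum_eq a
  rw [htsum, hshift, (Equiv.subRight n₀).summable_iff]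
  convert key using 2
  · simp [a]
  · field_simp
    ring

lemma abs_assouadBlockSum_le (i : ℤ) (c : κ) (x y : X) :
    |assouadBlockSum S i c x y| ≤ 2 * √(dist x y) := by
  rcases eq_or_ne x y with rfl | hxy
  · simp [assouadBlockSum, assouadTerm]
  set d := dist x y
  have hd : 0 < √d := Real.sqrt_pos.2 (dist_pos.2 hxy)
  obtain ⟨n₀, hlo, hhi⟩ := exists_dyadic_le_lt i (m := 6) (by norm_num) hd
  push_cast at hlo hhi
  set w := dyadic (i + 6 * n₀)
  have hw : 0 < w := dyadic_pos _
  have hsq : √d * √d = d := Real.mul_self_sqrt dist_nonneg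
  have hd4w : d / (4 * w) ≤ 16 * √d := by
    rw [div_le_iff₀ (by positivity)]
    norm_num at hhi
    nlinarith
  have htail := (summable_and_abs_assouadBlockSum_sub_le S i n₀ c x y).2
  have hcenter := abs_assouadTerm_le_dyadic S (i + 6 * n₀) c x y
  have := abs_sub_abs_le_abs_sub (assouadBlockSum S i c x y) (assouadTerm S (i + 6 * n₀) c x y)
  have : (w + d / (4 * w)) / 63 ≤ (√d + 16 * √d) / 63 := by gcongr
  linarith

lemma exists_three_quarters_le_abs_assouadTerm {j : ℤ}
    (hnet : ∀ x, ∃ c, ∃ a ∈ S j c, dist x a ≤ dyadic j ^ 2)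
    (hsep : ∀ c, (S j c).Pairwise (25 * dyadic j ^ 2 < dist · ·)) {x y : X}
    (h5 : 5 * dyadic j ^ 2 ≤ dist x y) (h20 : dist x y < 20 * dyadic j ^ 2) :
    ∃ c, 3 / 4 * dyadic j ≤ |assouadTerm S j c x y| := by
  set w := dyadic j
  have hw : 0 < w := dyadic_pos j
  obtain ⟨c, a, ha, hxa⟩ := hnet x
  have hr : 0 < 4 * w ^ 2 := by positivity
  have hx : 3 / 4 ≤ tent (S j c) (4 * w ^ 2) x :=
    three_quarters_le_tent hr ((infDist_le_dist_of_mem ha).trans (by linarith))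
  -- `y` is at distance `≥ 4 w²` from the whole color class: from `a` since `d(x, y) ≥ 5 w²`,
  -- and from the other points `a'` of the class since `dist a a' > 25 w²` while `d(x, y) < 20 w²`.
  have hy : tent (S j c) (4 * w ^ 2) y = 0 := by
    refine tent_eq_zero hr ((le_infDist ⟨a, ha⟩).2 fun a' ha' => ?_)
    rcases eq_or_ne a a' with rfl | hne
    · linarith [dist_triangle x a y, dist_comm a y]
    · linarith [hsep c ha ha' hne, dist_triangle a x a', dist_triangle x y a', dist_comm a x]
  refine ⟨c, ?_⟩
  rw [assouadTerm, hy, sub_zero, abs_of_nonneg (mul_nonneg hw.le (tent_nonneg x))]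
  nlinarith

lemma exists_le_abs_assouadBlockSum
    (hnet : ∀ j x, ∃ c, ∃ a ∈ S j c, dist x a ≤ dyadic j ^ 2)
    (hsep : ∀ j c, (S j c).Pairwise (25 * dyadic j ^ 2 < dist · ·)) {x y : X} (hxy : x ≠ y) :
    ∃ (i : Fin 6) (c : κ), √(dist x y) / 10 ≤ |assouadBlockSum S i c x y| := by
  set d := dist x y
  have hd : 0 < d := dist_pos.2 hxy
  obtain ⟨j₀, hlo, hhi⟩ :=
    exists_dyadic_le_lt 0 (m := 1) one_ne_zero (t := √(d / 5)) (by positivity)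
  simp only [Nat.cast_one, one_mul, zero_add, pow_one] at hlo hhi
  set w := dyadic j₀
  have hw : 0 < w := dyadic_pos _
  have h5 : 5 * w ^ 2 ≤ d := by
    have := (Real.le_sqrt hw.le (by positivity)).1 hlo
    linarith
  have h20 : d < 20 * w ^ 2 := by
    have := (Real.sqrt_lt' (by positivity)).1 hhi
    linarith
  obtain ⟨c, hcenter⟩ := exists_three_quarters_le_abs_assouadTerm S (hnet j₀) (hsep j₀) h5 h20
  let i : Fin 6 := ⟨(j₀ % 6).toNat, by omega⟩
  have hj₀ : (i : ℤ) + 6 * (j₀ / 6) = j₀ := by simp only [i]; omega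
  have htail := (summable_and_abs_assouadBlockSum_sub_le S i (j₀ / 6) c x y).2
  rw [hj₀, abs_sub_comm] at htail
  have hd4w : d / (4 * w) ≤ 5 * w := by
    rw [div_le_iff₀ (by positivity)]
    nlinarith
  have hsqrt : √d ≤ 5 * w := by
    rw [Real.sqrt_le_left (by positivity)]
    nlinarith
  have := abs_sub_abs_le_abs_sub (assouadTerm S j₀ c x y) (assouadBlockSum S i c x y)
  have : (w + d / (4 * w)) / 63 ≤ (w + 5 * w) / 63 := by gcongr
  exact ⟨i, c, by linarith⟩

lemma assouadMap_sub_assouadMap (x₀ x y : X) (ic : Fin 6 × κ) :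
    assouadMap S x₀ x ic - assouadMap S x₀ y ic = assouadBlockSum S ic.1 ic.2 x y := by
  rw [assouadMap, assouadMap, assouadBlockSum, assouadBlockSum, assouadBlockSum,
    ← (summable_and_abs_assouadBlockSum_sub_le S _ 0 _ x x₀).1.tsum_sub
    (summable_and_abs_assouadBlockSum_sub_le S _ 0 _ y x₀).1]
  simp_rw [assouadTerm_sub_assouadTerm]

lemma dist_assouadMap_le [Fintype κ] (x₀ x y : X) :
    dist (assouadMap S x₀ x) (assouadMap S x₀ y) ≤ 2 * √(dist x y) :=
  (dist_pi_le_iff (by positivity)).2 fun ic => by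
    rw [Real.dist_eq, assouadMap_sub_assouadMap]
    exact abs_assouadBlockSum_le S _ _ x y

lemma le_dist_assouadMap [Fintype κ]
    (hnet : ∀ j x, ∃ c, ∃ a ∈ S j c, dist x a ≤ dyadic j ^ 2)
    (hsep : ∀ j c, (S j c).Pairwise (25 * dyadic j ^ 2 < dist · ·)) (x₀ : X) {x y : X}
    (hxy : x ≠ y) : √(dist x y) / 10 ≤ dist (assouadMap S x₀ x) (assouadMap S x₀ y) := by
  obtain ⟨i, c, h⟩ := exists_le_abs_assouadBlockSum S hnet hsep hxy
  calc √(dist x y) / 10 ≤ _ := h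
    _ = dist (assouadMap S x₀ x (i, c)) (assouadMap S x₀ y (i, c)) := by
      rw [Real.dist_eq, assouadMap_sub_assouadMap]
    _ ≤ _ := dist_le_pi_dist _ _ (i, c)

end Assouad

theorem IsDoublingWith.exists_snowflake_embedding {X : Type*} [MetricSpace X] {C : ℕ}
    (h : IsDoublingWith X C) :
    ∃ (ι : Type) (_ : Fintype ι) (f : X → ι → ℝ), ∀ x y,
      √(dist x y) / 10 ≤ dist (f x) (f y) ∧ dist (f x) (f y) ≤ 2 * √(dist x y) := by
  rcases isEmpty_or_nonempty X with hX | ⟨⟨x₀⟩⟩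
  · exact ⟨Empty, inferInstance, isEmptyElim, isEmptyElim⟩
  choose S hnet hsep using fun j : ℤ => h.exists_colored_net (pow_pos (dyadic_pos j) 2)
  refine ⟨Fin 6 × Fin (C ^ 6), inferInstance, assouadMap S x₀, fun x y =>
    ⟨?_, dist_assouadMap_le S x₀ x y⟩⟩
  rcases eq_or_ne x y with rfl | hxy
  · simp
  · exact le_dist_assouadMap S hnet hsep x₀ hxy

section BCP

variable {X : Type*}

lemma encard_sep_iUnion_le_of_pairwiseDisjoint {ι α : Type*} {N : ℕ} (t : Fin N → Set ι)
    (B : ι → Set α) (ht : ∀ i, (t i).PairwiseDisjoint B) (z : α) :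
    {x ∈ ⋃ i, t i | z ∈ B x}.encard ≤ N := by
  have hfamily : ∀ i, {x ∈ t i | z ∈ B x}.encard ≤ 1 := fun i => by
    rw [encard_le_one_iff]
    rintro a b ⟨ha, hza⟩ ⟨hb, hzb⟩
    by_contra hne
    exact disjoint_left.1 (ht i ha hb hne) hza hzb
  calc {x ∈ ⋃ i, t i | z ∈ B x}.encard ≤ (⋃ i, {x ∈ t i | z ∈ B x}).encard := by
        refine encard_mono ?_
        rintro x ⟨hx, hzx⟩
        obtain ⟨i, hi⟩ := mem_iUnion.1 hx
        exact mem_iUnion.2 ⟨i, hi, hzx⟩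
    _ ≤ ∑ i, {x ∈ t i | z ∈ B x}.encard := encard_iUnion_le_of_fintype _
    _ ≤ ∑ _i : Fin N, 1 := Finset.sum_le_sum fun i _ => hfamily i
    _ = N := by simp

lemma hasBCP_dist_comp {E : Type*} [MetricSpace E] [HasBesicovitchCovering E]
    [TopologicalSpace.SeparableSpace E] (f : X → E) : HasBCP (fun x y => dist (f x) (f y)) := by
  obtain ⟨N, τ, hτ, hN⟩ := HasBesicovitchCovering.no_satelliteConfig (α := E)
  refine ⟨N + 1, by omega, fun A r ⟨p, R, hR, hA⟩ hr => ?_⟩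
  by_cases hbig : ∃ a ∈ A, 2 * R ≤ r a
  · obtain ⟨a, ha, hra⟩ := hbig
    refine ⟨{a}, singleton_subset_iff.2 ha, countable_singleton a,
      fun b hb => ⟨a, rfl, ?_⟩, fun y => ?_⟩
    · have hbp : dist (f b) (f p) ≤ R := hA hb
      have hap : dist (f a) (f p) ≤ R := hA ha
      show dist (f b) (f a) ≤ r a
      linarith [dist_triangle_right (f b) (f a) (f p)]
    · calc _ ≤ ({a} : Set X).encard := encard_mono (sep_subset _ _)
        _ ≤ _ := by simp
  push Not at hbig
  let q : Besicovitch.BallPackage A E :=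
    { c := fun a => f a, r := fun a => r a, rpos := fun a => hr a a.2, r_bound := 2 * R,
      r_le := fun a => (hbig a a.2).le }
  obtain ⟨s, hdisj, hcover⟩ := Besicovitch.exist_disjoint_covering_families hτ hN q
  refine ⟨⋃ i, Subtype.val '' s i, iUnion_subset fun i => Subtype.coe_image_subset _ _,
    countable_iUnion fun i => (((hdisj i).mono fun _ => ball_subset_closedBall).countable_of_isOpen
      (fun _ _ => isOpen_ball) fun a _ => nonempty_ball.2 (hr a a.2)).image _, ?_, fun y => ?_⟩
  · intro a ha
    have := hcover (mem_range_self ⟨a, ha⟩)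
    simp only [mem_iUnion] at this
    obtain ⟨i, b, hb, hab⟩ := this
    exact ⟨b, mem_iUnion.2 ⟨i, mem_image_of_mem _ hb⟩, (mem_ball.1 hab).le⟩
  refine (encard_sep_iUnion_le_of_pairwiseDisjoint _ (fun x => closedBall (f x) (r x))
    (fun i => Subtype.val_injective.injOn.pairwiseDisjoint_image.2 (hdisj i)) (f y)).trans ?_
  exact_mod_cast N.le_succ

lemma HasBCP.sq {ρ : X → X → ℝ} (hρ : ∀ p q, 0 ≤ ρ p q) (h : HasBCP ρ) :
    HasBCP (fun p q => ρ p q ^ 2) := by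
  have hball : ∀ x {r}, 0 ≤ r → QBall (fun p q => ρ p q ^ 2) x r = QBall ρ x √r :=
    fun x r hr => by ext y; exact (Real.le_sqrt (hρ y x) hr).symm
  obtain ⟨N, hN, hBCP⟩ := h
  refine ⟨N, hN, fun A r ⟨p, R, hR, hA⟩ hr => ?_⟩
  obtain ⟨F, hFA, hFc, hcover, hmult⟩ := hBCP A (fun x => √(r x))
    ⟨p, √R, Real.sqrt_pos.2 hR, hball p hR.le ▸ hA⟩ fun a ha => Real.sqrt_pos.2 (hr a ha)
  have hFball : ∀ x ∈ F, QBall (fun p q => ρ p q ^ 2) x (r x) = QBall ρ x √(r x) :=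
    fun x hx => hball x (hr x (hFA hx)).le
  refine ⟨F, hFA, hFc, fun a ha => ?_, fun y => ?_⟩
  · obtain ⟨x, hx, hax⟩ := hcover a ha
    exact ⟨x, hx, hFball x hx ▸ hax⟩
  · convert hmult y using 2
    ext x
    exact and_congr_right fun hx => by rw [hFball x hx]

lemma isQuasiDist_dist_comp_sq {E : Type*} [MetricSpace E] {f : X → E} (hf : Injective f) :
    IsQuasiDist (fun x y => dist (f x) (f y) ^ 2) := by
  refine ⟨fun _ _ => sq_nonneg _, fun x y => by simp only [dist_comm],
    fun _ _ => by simp [hf.eq_iff], 2, one_le_two, fun p p' q => ?_⟩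
  dsimp only
  nlinarith [pow_le_pow_left₀ dist_nonneg (dist_triangle (f p) (f p') (f q)) 2,
    sq_nonneg (dist (f p) (f p') - dist (f p') (f q))]

end BCP

open Filter Topology in
lemma continuous_of_dist_le_mul_sqrt {X Y : Type*} [PseudoMetricSpace X] [PseudoMetricSpace Y]
    {f : X → Y} {K : ℝ} (hf : ∀ x y, dist (f x) (f y) ≤ K * √(dist x y)) : Continuous f := by
  refine continuous_iff_continuousAt.2 fun x => tendsto_iff_dist_tendsto_zero.2 ?_
  have hlim : Tendsto (fun y => K * √(dist y x)) (𝓝 x) (𝓝 (K * √(dist x x))) :=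
    ((tendsto_id.dist tendsto_const_nhds).sqrt).const_mul K
  rw [dist_self, Real.sqrt_zero, mul_zero] at hlim
  exact squeeze_zero (fun _ => dist_nonneg) (fun y => hf y x) hlim

/-- On a doubling metric space there exists a continuous quasi-distance, biLipschitz
equivalent to the original distance, satisfying BCP. -/
theorem statement6 {X : Type*} [MetricSpace X]
    (hdoub : IsDoubling (fun p q : X => dist p q)) :
    ∃ ρ : X → X → ℝ, IsQuasiDist ρ ∧
      Continuous (fun pq : X × X => ρ pq.1 pq.2) ∧
      (∃ L : ℝ, 1 ≤ L ∧ ∀ x y, L⁻¹ * dist x y ≤ ρ x y ∧ ρ x y ≤ L * dist x y) ∧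
      HasBCP ρ := by
  obtain ⟨C, -, hC⟩ := hdoub
  obtain ⟨ι, _, f, hf⟩ := IsDoublingWith.exists_snowflake_embedding (C := C) hC
  have hinj : Injective f := fun x y hxy => by
    by_contra hne
    have := (hf x y).1
    rw [hxy, dist_self] at this
    linarith [Real.sqrt_pos.2 (dist_pos.2 hne)]
  have hcont : Continuous f := continuous_of_dist_le_mul_sqrt fun x y => (hf x y).2
  refine ⟨fun x y => dist (f x) (f y) ^ 2, isQuasiDist_dist_comp_sq hinj, by fun_prop,
    ⟨100, by norm_num, fun x y => ⟨?_, ?_⟩⟩, (hasBCP_dist_comp f).sq fun _ _ => dist_nonneg⟩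
  · calc (100 : ℝ)⁻¹ * dist x y = (√(dist x y) / 10) ^ 2 := by
          rw [div_pow, Real.sq_sqrt dist_nonneg]; ring
      _ ≤ dist (f x) (f y) ^ 2 := by gcongr; exact (hf x y).1
  · calc dist (f x) (f y) ^ 2 ≤ (2 * √(dist x y)) ^ 2 := by gcongr; exact (hf x y).2
      _ = 4 * dist x y := by rw [mul_pow, Real.sq_sqrt dist_nonneg]; norm_num
      _ ≤ 100 * dist x y := by linarith [dist_nonneg (x := x) (y := y)]
end

section
/- Let 𝔤 be a nonzero finite-dimensional real Lie algebra with a positive grading (V_t)_{t>0} that has commuting different layers, i.e., ⁅V_t,V_s⁆ = 0 for all t, s > 0 with t ≠ s. Let t₁ be the smallest t > 0 with V_t ≠ {0}. Then 𝔥 := V_{t₁} + ⁅V_{t₁},V_{t₁}⁆ is a Lie ideal of 𝔤 satisfying ⁅𝔥,⁅𝔥,𝔥⁆⁆ = 0 (so 𝔥 is nilpotent of step at most 2), and there exists a Lie ideal 𝔥' of 𝔤 such that 𝔤 = 𝔥 ⊕ 𝔥' (internal direct sum of subspaces). -/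
def bracketSpan {L : Type*} [LieRing L] [LieAlgebra ℝ L] (V W : Submodule ℝ L) :
    Submodule ℝ L :=
  Submodule.span ℝ (Set.image2 (fun x y => ⁅x, y⁆) (V : Set L) (W : Set L))

/-!
With commuting different layers, `⁅x, y⁆` for `y ∈ V u` only sees the `u`-component of `x`, so
`⁅𝔤, V u⁆ ⊆ ⁅V u, V u⁆ ⊆ V (2u)`. For `u = t₁` this makes `𝔥` an ideal with `⁅𝔤, 𝔥⁆ ⊆ ⁅V t₁, V t₁⁆`,
and `⁅V t₁, V t₁⁆` is central by the Jacobi identity, since `⁅𝔤, V t₁⁆ ⊆ V (2t₁)` commutes with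
`V t₁`. A complementary ideal is `W ⊕ ⨁_{t ≠ t₁, 2t₁} V t`, where `W` complements
`⁅V t₁, V t₁⁆` in `V (2t₁)`: it is an ideal because `⁅𝔤, V u⁆ ⊆ V (2u)` and, by minimality of
`t₁`, doubling never lands in `{t₁, 2t₁}` except from `t₁`.
-/

theorem Disjoint.isCompl_sup_sup {α : Type*} [Lattice α] [BoundedOrder α] [IsModularLattice α]
    {x y b w s : α} (hxy : Disjoint x y) (hbw : Disjoint b w) (hbw_sup : b ⊔ w = y)
    (hs : IsCompl (x ⊔ y) s) : IsCompl (x ⊔ b) (w ⊔ s) := by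
  refine Disjoint.isCompl_sup_right_of_isCompl_sup_left ?_ ?_
  · exact hbw.disjoint_sup_left_of_disjoint_sup_right (hbw_sup ▸ hxy)
  · rwa [sup_assoc, hbw_sup]

theorem exists_disjoint_sup_eq_of_le {α : Type*} [Lattice α] [BoundedOrder α]
    [IsModularLattice α] [ComplementedLattice α] {b y : α} (hby : b ≤ y) :
    ∃ w ≤ y, Disjoint b w ∧ b ⊔ w = y := by
  obtain ⟨w, hw⟩ := exists_isCompl b
  refine ⟨w ⊓ y, inf_le_right, hw.disjoint.mono_right inf_le_left, ?_⟩
  rw [← sup_inf_assoc_of_le w hby, hw.sup_eq_top, top_inf_eq]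

theorem iSupIndep.isCompl_biSup_biSup_compl {ι α : Type*} [CompleteLattice α]
    [IsModularLattice α] [IsCompactlyGenerated α] {f : ι → α} (hf : iSupIndep f)
    (htop : ⨆ i, f i = ⊤) (s : Set ι) : IsCompl (⨆ i ∈ s, f i) (⨆ i ∈ sᶜ, f i) := by
  refine ⟨hf.disjoint_biSup_biSup disjoint_compl_right, codisjoint_iff.mpr ?_⟩
  rw [← iSup_union, Set.union_compl_self, iSup_univ, htop]

section bracketSpan

variable {L : Type*} [LieRing L] [LieAlgebra ℝ L]

theorem bracketSpan_le_iff {V W U : Submodule ℝ L} :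
    bracketSpan V W ≤ U ↔ ∀ x ∈ V, ∀ y ∈ W, ⁅x, y⁆ ∈ U := by
  rw [bracketSpan, Submodule.span_le, Set.image2_subset_iff]
  rfl

theorem lie_mem_bracketSpan {V W : Submodule ℝ L} {x y : L} (hx : x ∈ V) (hy : y ∈ W) :
    ⁅x, y⁆ ∈ bracketSpan V W :=
  Submodule.subset_span (Set.mem_image2_of_mem hx hy)

end bracketSpan

namespace PositiveGrading

variable {L : Type*} [LieRing L] [LieAlgebra ℝ L] {V : ℝ → Submodule ℝ L}

theorem bracketSpan_self_le
    (hgrad : ∀ s t : ℝ, 0 < s → 0 < t → ∀ x ∈ V s, ∀ y ∈ V t, ⁅x, y⁆ ∈ V (s + t))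
    {u : ℝ} (hu : 0 < u) : bracketSpan (V u) (V u) ≤ V (2 * u) :=
  bracketSpan_le_iff.mpr fun x hx y hy => two_mul u ▸ hgrad u u hu hu x hx y hy

theorem lie_mem_bracketSpan_self (hspan : (⨆ t : {t : ℝ // 0 < t}, V t) = ⊤)
    (hcomm : ∀ s t : ℝ, 0 < s → 0 < t → s ≠ t → ∀ x ∈ V s, ∀ y ∈ V t, ⁅x, y⁆ = 0)
    {u : ℝ} (hu : 0 < u) (x : L) {y : L} (hy : y ∈ V u) :
    ⁅x, y⁆ ∈ bracketSpan (V u) (V u) := by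
  have hx : x ∈ ⨆ t : {t : ℝ // 0 < t}, V t := hspan ▸ Submodule.mem_top
  refine Submodule.iSup_induction _ (motive := fun x => ⁅x, y⁆ ∈ bracketSpan (V u) (V u)) hx
    (fun t x hx => ?_) (by simp) (fun x x' hx hx' => by simpa only [add_lie] using add_mem hx hx')
  by_cases htu : (t : ℝ) = u
  · exact lie_mem_bracketSpan (htu ▸ hx) hy
  · rw [hcomm t u t.2 hu htu x hx y hy]
    exact zero_mem _

theorem lie_mem_two_mul (hspan : (⨆ t : {t : ℝ // 0 < t}, V t) = ⊤)
    (hgrad : ∀ s t : ℝ, 0 < s → 0 < t → ∀ x ∈ V s, ∀ y ∈ V t, ⁅x, y⁆ ∈ V (s + t))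
    (hcomm : ∀ s t : ℝ, 0 < s → 0 < t → s ≠ t → ∀ x ∈ V s, ∀ y ∈ V t, ⁅x, y⁆ = 0)
    {u : ℝ} (hu : 0 < u) (x : L) {y : L} (hy : y ∈ V u) : ⁅x, y⁆ ∈ V (2 * u) :=
  bracketSpan_self_le hgrad hu (lie_mem_bracketSpan_self hspan hcomm hu x hy)

theorem lie_eq_zero_of_mem_bracketSpan_self (hspan : (⨆ t : {t : ℝ // 0 < t}, V t) = ⊤)
    (hgrad : ∀ s t : ℝ, 0 < s → 0 < t → ∀ x ∈ V s, ∀ y ∈ V t, ⁅x, y⁆ ∈ V (s + t))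
    (hcomm : ∀ s t : ℝ, 0 < s → 0 < t → s ≠ t → ∀ x ∈ V s, ∀ y ∈ V t, ⁅x, y⁆ = 0)
    {u : ℝ} (hu : 0 < u) (x : L) {y : L} (hy : y ∈ bracketSpan (V u) (V u)) : ⁅x, y⁆ = 0 := by
  have h2u : 0 < 2 * u := by positivity
  have hne : 2 * u ≠ u := by linarith
  have hker : bracketSpan (V u) (V u) ≤ LinearMap.ker (LieAlgebra.ad ℝ L x) := by
    refine bracketSpan_le_iff.mpr fun a ha b hb => ?_
    rw [LinearMap.mem_ker, LieAlgebra.ad_apply, leibniz_lie,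
      hcomm _ _ h2u hu hne _ (lie_mem_two_mul hspan hgrad hcomm hu x ha) b hb,
      hcomm _ _ hu h2u hne.symm a ha _ (lie_mem_two_mul hspan hgrad hcomm hu x hb), add_zero]
  exact hker hy

theorem lie_mem_bracketSpan_self_of_mem_sup (hspan : (⨆ t : {t : ℝ // 0 < t}, V t) = ⊤)
    (hgrad : ∀ s t : ℝ, 0 < s → 0 < t → ∀ x ∈ V s, ∀ y ∈ V t, ⁅x, y⁆ ∈ V (s + t))
    (hcomm : ∀ s t : ℝ, 0 < s → 0 < t → s ≠ t → ∀ x ∈ V s, ∀ y ∈ V t, ⁅x, y⁆ = 0)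
    {u : ℝ} (hu : 0 < u) (x : L) {y : L} (hy : y ∈ V u ⊔ bracketSpan (V u) (V u)) :
    ⁅x, y⁆ ∈ bracketSpan (V u) (V u) := by
  obtain ⟨a, ha, b, hb, rfl⟩ := Submodule.mem_sup.mp hy
  rw [lie_add, lie_eq_zero_of_mem_bracketSpan_self hspan hgrad hcomm hu x hb, add_zero]
  exact lie_mem_bracketSpan_self hspan hcomm hu x ha

theorem lie_mem_biSup_of_two_mul_mem (hspan : (⨆ t : {t : ℝ // 0 < t}, V t) = ⊤)
    (hgrad : ∀ s t : ℝ, 0 < s → 0 < t → ∀ x ∈ V s, ∀ y ∈ V t, ⁅x, y⁆ ∈ V (s + t))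
    (hcomm : ∀ s t : ℝ, 0 < s → 0 < t → s ≠ t → ∀ x ∈ V s, ∀ y ∈ V t, ⁅x, y⁆ = 0)
    {T : Set {t : ℝ // 0 < t}}
    (hT : ∀ t ∈ T, V t ≠ ⊥ → (⟨2 * t, mul_pos two_pos t.2⟩ : {t : ℝ // 0 < t}) ∈ T)
    (x : L) {y : L} (hy : y ∈ ⨆ t ∈ T, V t) : ⁅x, y⁆ ∈ ⨆ t ∈ T, V t := by
  have hle : ⨆ t ∈ T, V t ≤ (⨆ t ∈ T, V t).comap (LieAlgebra.ad ℝ L x) := by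
    refine iSup₂_le fun t ht z hz => ?_
    rw [Submodule.mem_comap, LieAlgebra.ad_apply]
    by_cases hbot : V t = ⊥
    · rw [show z = 0 by simpa [hbot] using hz, lie_zero]
      exact zero_mem _
    · exact le_biSup (fun t : {t : ℝ // 0 < t} => V t) (hT t ht hbot)
        (lie_mem_two_mul hspan hgrad hcomm t.2 x hz)
  exact hle hy

end PositiveGrading

open PositiveGrading

theorem statement9_general {L : Type*} [LieRing L] [LieAlgebra ℝ L]
    (V : ℝ → Submodule ℝ L)
    (hspan : (⨆ t : {t : ℝ // 0 < t}, V t) = ⊤)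
    (hindep : iSupIndep (fun t : {t : ℝ // 0 < t} => V t))
    (hgrad : ∀ s t : ℝ, 0 < s → 0 < t → ∀ x ∈ V s, ∀ y ∈ V t, ⁅x, y⁆ ∈ V (s + t))
    (hcomm : ∀ s t : ℝ, 0 < s → 0 < t → s ≠ t → ∀ x ∈ V s, ∀ y ∈ V t, ⁅x, y⁆ = 0)
    (t₁ : ℝ) (ht₁pos : 0 < t₁)
    (ht₁min : ∀ t : ℝ, 0 < t → V t ≠ ⊥ → t₁ ≤ t) :
    (∀ x : L, ∀ y ∈ V t₁ ⊔ bracketSpan (V t₁) (V t₁),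
        ⁅x, y⁆ ∈ V t₁ ⊔ bracketSpan (V t₁) (V t₁)) ∧
    (∀ x ∈ V t₁ ⊔ bracketSpan (V t₁) (V t₁),
      ∀ y ∈ V t₁ ⊔ bracketSpan (V t₁) (V t₁),
      ∀ z ∈ V t₁ ⊔ bracketSpan (V t₁) (V t₁), ⁅x, ⁅y, z⁆⁆ = 0) ∧
    ∃ 𝔥' : Submodule ℝ L,
      (∀ x : L, ∀ y ∈ 𝔥', ⁅x, y⁆ ∈ 𝔥') ∧
      (V t₁ ⊔ bracketSpan (V t₁) (V t₁)) ⊔ 𝔥' = ⊤ ∧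
      (V t₁ ⊔ bracketSpan (V t₁) (V t₁)) ⊓ 𝔥' = ⊥ := by
  have h2t₁ : 0 < 2 * t₁ := by positivity
  let p₁ : {t : ℝ // 0 < t} := ⟨t₁, ht₁pos⟩
  let p₂ : {t : ℝ // 0 < t} := ⟨2 * t₁, h2t₁⟩
  have hp₁₂ : p₁ ≠ p₂ := fun h => by linarith [congrArg Subtype.val h]
  have mem_compl_iff : ∀ t, t ∈ ({p₁, p₂}ᶜ : Set {t : ℝ // 0 < t}) ↔
      (t : ℝ) ≠ t₁ ∧ (t : ℝ) ≠ 2 * t₁ := by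
    simp only [Set.mem_compl_iff, Set.mem_insert_iff, Set.mem_singleton_iff, Subtype.ext_iff,
      not_or, p₁, p₂, implies_true]
  let S := ⨆ t ∈ ({p₁, p₂}ᶜ : Set {t : ℝ // 0 < t}), V t
  have hS : IsCompl (V t₁ ⊔ V (2 * t₁)) S := by
    simpa only [iSup_pair] using hindep.isCompl_biSup_biSup_compl hspan {p₁, p₂}
  have hS_ideal : ∀ x : L, ∀ y ∈ S, ⁅x, y⁆ ∈ S := by
    refine lie_mem_biSup_of_two_mul_mem hspan hgrad hcomm fun t ht hbot => ?_
    have ht₁t : t₁ < t := lt_of_le_of_ne (ht₁min t t.2 hbot) ((mem_compl_iff t).mp ht).1.symm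
    exact (mem_compl_iff _).mpr ⟨(by linarith : t₁ < 2 * t).ne', (by linarith : 2 * t₁ < 2 * t).ne'⟩
  obtain ⟨W, hWle, hBW, hBW_sup⟩ := exists_disjoint_sup_eq_of_le (bracketSpan_self_le hgrad ht₁pos)
  have hW_ideal : ∀ x : L, ∀ y ∈ W, ⁅x, y⁆ ∈ S := fun x y hy =>
    le_biSup (fun t : {t : ℝ // 0 < t} => V t) (i := ⟨2 * (2 * t₁), by positivity⟩)
      ((mem_compl_iff _).mpr
        ⟨(by linarith : t₁ < 2 * (2 * t₁)).ne', (by linarith : 2 * t₁ < 2 * (2 * t₁)).ne'⟩)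
      (lie_mem_two_mul hspan hgrad hcomm h2t₁ x (hWle hy))
  have hcompl := (hindep.pairwiseDisjoint hp₁₂).isCompl_sup_sup hBW hBW_sup hS
  refine ⟨fun x y hy => ?_, fun x _ y _ z hz => ?_, W ⊔ S, fun x y hy => ?_,
    hcompl.sup_eq_top, hcompl.inf_eq_bot⟩
  · exact Submodule.mem_sup_right
      (lie_mem_bracketSpan_self_of_mem_sup hspan hgrad hcomm ht₁pos x hy)
  · exact lie_eq_zero_of_mem_bracketSpan_self hspan hgrad hcomm ht₁pos x
      (lie_mem_bracketSpan_self_of_mem_sup hspan hgrad hcomm ht₁pos y hz)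
  · obtain ⟨w, hw, s, hs, rfl⟩ := Submodule.mem_sup.mp hy
    rw [lie_add]
    exact Submodule.mem_sup_right (add_mem (hW_ideal x w hw) (hS_ideal x s hs))

/-- Let `𝔤` be a nonzero finite-dimensional real Lie algebra with a positive grading
`(V t)_{t>0}` with commuting different layers, and let `t₁` be the smallest `t > 0` with
`V t ≠ ⊥`. Then `𝔥 := V t₁ ⊔ ⁅V t₁, V t₁⁆` is a Lie ideal with `⁅𝔥,⁅𝔥,𝔥⁆⁆ = 0` and it
admits a complementary Lie ideal `𝔥'`. -/
theorem statement9 {L : Type*} [LieRing L] [LieAlgebra ℝ L] [Module.Finite ℝ L]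
    [Nontrivial L]
    (V : ℝ → Submodule ℝ L)
    (hfin : {t : ℝ | 0 < t ∧ V t ≠ ⊥}.Finite)
    (hspan : (⨆ t : {t : ℝ // 0 < t}, V t) = ⊤)
    (hindep : iSupIndep (fun t : {t : ℝ // 0 < t} => V t))
    (hgrad : ∀ s t : ℝ, 0 < s → 0 < t → ∀ x ∈ V s, ∀ y ∈ V t, ⁅x, y⁆ ∈ V (s + t))
    (hcomm : ∀ s t : ℝ, 0 < s → 0 < t → s ≠ t → ∀ x ∈ V s, ∀ y ∈ V t, ⁅x, y⁆ = 0)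
    (t₁ : ℝ) (ht₁pos : 0 < t₁) (ht₁ne : V t₁ ≠ ⊥)
    (ht₁min : ∀ t : ℝ, 0 < t → V t ≠ ⊥ → t₁ ≤ t) :
    (∀ x : L, ∀ y ∈ V t₁ ⊔ bracketSpan (V t₁) (V t₁),
        ⁅x, y⁆ ∈ V t₁ ⊔ bracketSpan (V t₁) (V t₁)) ∧
    (∀ x ∈ V t₁ ⊔ bracketSpan (V t₁) (V t₁),
      ∀ y ∈ V t₁ ⊔ bracketSpan (V t₁) (V t₁),
      ∀ z ∈ V t₁ ⊔ bracketSpan (V t₁) (V t₁), ⁅x, ⁅y, z⁆⁆ = 0) ∧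
    ∃ 𝔥' : Submodule ℝ L,
      (∀ x : L, ∀ y ∈ 𝔥', ⁅x, y⁆ ∈ 𝔥') ∧
      (V t₁ ⊔ bracketSpan (V t₁) (V t₁)) ⊔ 𝔥' = ⊤ ∧
      (V t₁ ⊔ bracketSpan (V t₁) (V t₁)) ⊓ 𝔥' = ⊥ :=
  statement9_general V hspan hindep hgrad hcomm t₁ ht₁pos ht₁min
end
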